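/- For integers n and k with n > 4 and 4 ≤ k ≤ n − 1, every connected graph G of order n with mvd(G) = k satisfies |E(G)| ≤ n(n−1)/2 − k + 2, and this maximum is attained (e.g., by adding a vertex joined to n − k + 1 vertices of K_{n−1}). -/

import Mathlib

open SimpleGraph

variable {V : Type*}

/-- `S` is a set of vertices (not containing `x` or `y`) whose removal separates `x` from `y`:
every walk from `x` to `y` meets `S`. -/
def IsSepSet (G : SimpleGraph V) (S : Set V) (x y : V) : Prop :=
  x ∉ S ∧ y ∉ S ∧ ∀ p : G.Walk x y, ∃ v ∈ p.support, v ∈ S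

/-- `τ` is an MVD-coloring of `G`: every pair of distinct nonadjacent vertices is
separated by a monochromatic vertex cut. -/
def IsMVDColoring (G : SimpleGraph V) (τ : V → ℕ) : Prop :=
  ∀ x y : V, x ≠ y → ¬ G.Adj x y →
    ∃ S : Set V, IsSepSet G S x y ∧ ∀ u ∈ S, ∀ w ∈ S, τ u = τ w

/-- The monochromatic vertex-disconnection number: the maximum number of colors
used by an MVD-coloring of `G`. -/
noncomputable def mvd (G : SimpleGraph V) : ℕ :=
  sSup {k | ∃ τ : V → ℕ, IsMVDColoring G τ ∧ (Set.range τ).ncard = k}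

/-!
If `x, y` are nonadjacent and `S` is a monochromatic cut separating them, let `A` be the set of
vertices reachable from `x` without meeting `S`. Sending `a ∈ A` to the non-edge `ay` and every
other vertex `b ∉ S ∪ {y}` to the non-edge `xb` is injective, so `|V ∖ S| ≤ |E(Ḡ)| + 1`. The
coloring uses at most one color on `S`, hence `mvd G ≤ |E(Ḡ)| + 2` whenever `G` is not complete,
which is the edge bound. For the extremal graph, delete from the complete graph the edges between
a vertex `u` and a set `T`: the neighborhood of `u` is a cut for every nonadjacent pair, so
coloring it with one color and `T ∪ {u}` injectively uses `|T| + 2 = |E(Ḡ)| + 2` colors.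
-/

variable {G : SimpleGraph V}

lemma SimpleGraph.ncard_edgeSet_add_ncard_edgeSet_compl [Fintype V] (G : SimpleGraph V) :
    G.edgeSet.ncard + Gᶜ.edgeSet.ncard = (Fintype.card V).choose 2 := by
  classical
  rw [← Set.ncard_union_eq (disjoint_edgeSet.2 disjoint_compl_right), ← edgeSet_sup,
    sup_compl_eq_top, ← coe_edgeFinset, Set.ncard_coe_finset,
    card_edgeFinset_top_eq_card_choose_two]

namespace IsSepSet

variable {S : Set V} {x y : V}

lemma symm (h : IsSepSet G S x y) : IsSepSet G S y x :=
  ⟨h.2.1, h.1, fun p => by simpa using h.2.2 p.reverse⟩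

lemma of_neighborSet_subset (hN : G.neighborSet x ⊆ S) (hx : x ∉ S) (hy : y ∉ S)
    (hxy : x ≠ y) : IsSepSet G S x y :=
  ⟨hx, hy, fun p => ⟨p.snd, p.getVert_mem_support 1, hN (p.adj_snd (Walk.not_nil_of_ne hxy))⟩⟩

end IsSepSet

namespace SimpleGraph

def reachAvoiding (G : SimpleGraph V) (S : Set V) (x : V) : Set V :=
  {v | ∃ p : G.Walk x v, ∀ u ∈ p.support, u ∉ S}

variable {S : Set V} {x : V}

lemma self_mem_reachAvoiding (hx : x ∉ S) : x ∈ G.reachAvoiding S x :=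
  ⟨Walk.nil, by simpa using hx⟩

lemma mem_reachAvoiding_of_adj {a b : V} (ha : a ∈ G.reachAvoiding S x) (hb : b ∉ S)
    (hab : G.Adj a b) : b ∈ G.reachAvoiding S x := by
  obtain ⟨p, hp⟩ := ha
  refine ⟨p.concat hab, fun u hu => ?_⟩
  rw [Walk.support_concat, List.mem_append, List.mem_singleton] at hu
  rcases hu with hu | rfl
  exacts [hp u hu, hb]

end SimpleGraph

lemma IsSepSet.notMem_reachAvoiding {S : Set V} {x y : V} (h : IsSepSet G S x y) :
    y ∉ G.reachAvoiding S x := by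
  rintro ⟨p, hp⟩
  obtain ⟨v, hv, hvS⟩ := h.2.2 p
  exact hp v hv hvS

lemma IsSepSet.ncard_compl_le_ncard_compl_edgeSet_add_one [Finite V] {S : Set V} {x y : V}
    (h : IsSepSet G S x y) : Sᶜ.ncard ≤ Gᶜ.edgeSet.ncard + 1 := by
  classical
  set A := G.reachAvoiding S x
  have hxA : x ∈ A := self_mem_reachAvoiding h.1
  have hyA : y ∉ A := h.notMem_reachAvoiding
  let f : V → Sym2 V := fun v => if v ∈ A then s(v, y) else s(x, v)
  have hmaps : ∀ v ∈ Sᶜ \ {y}, f v ∈ Gᶜ.edgeSet := by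
    rintro v ⟨hvS, hvy⟩
    by_cases hvA : v ∈ A
    · simp only [f, if_pos hvA, mem_edgeSet, compl_adj]
      exact ⟨hvy, fun hadj => hyA (mem_reachAvoiding_of_adj hvA h.2.1 hadj)⟩
    · simp only [f, if_neg hvA, mem_edgeSet, compl_adj]
      exact ⟨fun hxv => hvA (hxv ▸ hxA), fun hadj => hvA (mem_reachAvoiding_of_adj hxA hvS hadj)⟩
  have hinj : Set.InjOn f (Sᶜ \ {y}) := by
    rintro a ⟨-, hay⟩ b ⟨-, hby⟩ hab
    by_cases haA : a ∈ A <;> by_cases hbA : b ∈ A <;>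
      simp only [f, haA, hbA, if_true, if_false, Sym2.eq_iff] at hab <;> grind
  have hsdiff := Set.ncard_sdiff_singleton_add_one (show y ∈ Sᶜ from h.2.1)
  have := Set.ncard_le_ncard_of_injOn f hmaps hinj
  omega

lemma ncard_range_le_ncard_compl_add_one [Finite V] {α : Type*} {τ : V → α} {S : Set V}
    (hS : ∀ u ∈ S, ∀ w ∈ S, τ u = τ w) : (Set.range τ).ncard ≤ Sᶜ.ncard + 1 := by
  have hS1 : (τ '' S).ncard ≤ 1 := by
    rw [Set.ncard_le_one]
    rintro _ ⟨u, hu, rfl⟩ _ ⟨w, hw, rfl⟩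
    exact hS u hu w hw
  calc (Set.range τ).ncard = (τ '' S ∪ τ '' Sᶜ).ncard := by
        rw [← Set.image_union, Set.union_compl_self, Set.image_univ]
    _ ≤ (τ '' S).ncard + (τ '' Sᶜ).ncard := Set.ncard_union_le _ _
    _ ≤ 1 + Sᶜ.ncard := add_le_add hS1 (Set.ncard_image_le)
    _ = Sᶜ.ncard + 1 := add_comm _ _

lemma le_mvd [Finite V] {τ : V → ℕ} (hτ : IsMVDColoring G τ) : (Set.range τ).ncard ≤ mvd G := by
  refine le_csSup ⟨Nat.card V, ?_⟩ ⟨τ, hτ, rfl⟩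
  rintro _ ⟨σ, -, rfl⟩
  rw [← Set.image_univ, ← Set.ncard_univ]
  exact Set.ncard_image_le

lemma card_le_mvd_top [Finite V] : Nat.card V ≤ mvd (⊤ : SimpleGraph V) := by
  obtain ⟨f, hf⟩ := Countable.exists_injective_nat V
  rw [← Set.ncard_range_of_injective hf]
  exact le_mvd fun _ _ hxy hna => absurd hxy hna

lemma mvd_le_ncard_compl_edgeSet_add_two [Finite V] (hG : G ≠ ⊤) :
    mvd G ≤ Gᶜ.edgeSet.ncard + 2 := by
  obtain ⟨x, y, hxy, hna⟩ := ne_top_iff_exists_not_adj.1 hG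
  refine csSup_le' ?_
  rintro _ ⟨τ, hτ, rfl⟩
  obtain ⟨S, hS, hmono⟩ := hτ x y hxy hna
  have := ncard_range_le_ncard_compl_add_one hmono
  have := hS.ncard_compl_le_ncard_compl_edgeSet_add_one
  omega

lemma ncard_edgeSet_add_mvd_le [Fintype V] (hG : mvd G < Fintype.card V) :
    G.edgeSet.ncard + mvd G ≤ (Fintype.card V).choose 2 + 2 := by
  have hne : G ≠ ⊤ := by
    rintro rfl
    have := card_le_mvd_top (V := V)
    rw [Nat.card_eq_fintype_card] at this
    omega
  have := mvd_le_ncard_compl_edgeSet_add_two hne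
  have := G.ncard_edgeSet_add_ncard_edgeSet_compl
  omega

def completeGraphDeleteStar (u : V) (T : Set V) : SimpleGraph V :=
  (⊤ : SimpleGraph V).deleteEdges ((fun t => s(u, t)) '' T)

namespace completeGraphDeleteStar

variable {u w : V} {T : Set V}

lemma compl_edgeSet (hu : u ∉ T) :
    (completeGraphDeleteStar u T)ᶜ.edgeSet = (fun t => s(u, t)) '' T := by
  ext e
  induction e with
  | _ a b =>
    simp only [mem_edgeSet, compl_adj, completeGraphDeleteStar, deleteEdges_adj, top_adj]
    constructor
    · rintro ⟨hab, h⟩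
      by_contra hn
      exact h ⟨hab, hn⟩
    · rintro ⟨t, ht, he⟩
      refine ⟨?_, fun h => h.2 ⟨t, ht, he⟩⟩
      rintro rfl
      rw [Sym2.eq_iff] at he
      grind

lemma ncard_compl_edgeSet (hu : u ∉ T) :
    (completeGraphDeleteStar u T)ᶜ.edgeSet.ncard = T.ncard := by
  rw [compl_edgeSet hu, Set.ncard_image_of_injective _ fun _ _ h => Sym2.congr_right.mp h]

lemma adj_of_notMem_insert (hw : w ∉ insert u T) {v : V} (hv : w ≠ v) :
    (completeGraphDeleteStar u T).Adj w v := by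
  refine (deleteEdges_adj ..).2 ⟨hv, ?_⟩
  rintro ⟨t, ht, he⟩
  rw [Sym2.eq_iff] at he
  grind

lemma connected (hw : w ∉ insert u T) : (completeGraphDeleteStar u T).Connected := by
  refine (connected_iff_exists_forall_reachable _).2 ⟨w, fun v => ?_⟩
  by_cases hv : w = v
  · exact hv ▸ Reachable.refl w
  · exact (adj_of_notMem_insert hw hv).reachable

lemma neighborSet_subset :
    (completeGraphDeleteStar u T).neighborSet u ⊆ (insert u T)ᶜ := by
  rintro v hv (hvu | hvT)
  · exact (completeGraphDeleteStar u T).ne_of_adj hv hvu.symm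
  · exact ((deleteEdges_adj ..).1 hv).2 ⟨v, hvT, rfl⟩

lemma isMVDColoring_piecewise (hu : u ∉ T) (σ : V → ℕ) (c : ℕ)
    [DecidablePred (· ∈ insert u T)] :
    IsMVDColoring (completeGraphDeleteStar u T) ((insert u T).piecewise σ fun _ => c) := by
  intro x y hxy hna
  refine ⟨(insert u T)ᶜ, ?_, fun a ha b hb => by
    rw [Set.piecewise_eq_of_notMem _ _ _ ha, Set.piecewise_eq_of_notMem _ _ _ hb]⟩
  obtain ⟨t, ht, he⟩ : s(x, y) ∈ (fun t => s(u, t)) '' T := by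
    rw [← compl_edgeSet hu]
    exact (compl_adj ..).2 ⟨hxy, hna⟩
  have hS : IsSepSet (completeGraphDeleteStar u T) (insert u T)ᶜ u t :=
    .of_neighborSet_subset neighborSet_subset (by simp) (by simp [ht]) (by rintro rfl; exact hu ht)
  rcases Sym2.eq_iff.1 he with ⟨rfl, rfl⟩ | ⟨rfl, rfl⟩
  exacts [hS, hS.symm]

lemma mvd_eq [Finite V] (hu : u ∉ T) (hw : w ∉ insert u T) (hT : T.Nonempty) :
    mvd (completeGraphDeleteStar u T) = T.ncard + 2 := by
  classical
  refine le_antisymm ?_ ?_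
  · obtain ⟨t, ht⟩ := hT
    have hne : completeGraphDeleteStar u T ≠ ⊤ := ne_top_iff_exists_not_adj.2
      ⟨u, t, fun h => hu (h ▸ ht), fun h => ((deleteEdges_adj ..).1 h).2 ⟨t, ht, rfl⟩⟩
    simpa [ncard_compl_edgeSet hu] using mvd_le_ncard_compl_edgeSet_add_two hne
  · obtain ⟨f, hf⟩ := Countable.exists_injective_nat V
    set τ := (insert u T).piecewise (fun v => f v + 1) fun _ => 0
    have hinj : Set.InjOn τ (insert w (insert u T)) := by
      intro a ha b hb hab
      simp only [τ, Set.piecewise] at hab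
      grind
    calc T.ncard + 2 = (insert w (insert u T)).ncard := by
          rw [Set.ncard_insert_of_notMem hw, Set.ncard_insert_of_notMem hu]
      _ ≤ (Set.range τ).ncard := Set.ncard_le_ncard_of_injOn τ (fun a _ => ⟨a, rfl⟩) hinj
      _ ≤ _ := le_mvd (isMVDColoring_piecewise hu _ _)

end completeGraphDeleteStar

theorem max_size_mvd_k_general (n k : ℕ) (hk : 4 ≤ k) (hkn : k ≤ n - 1) :
    (∀ (W : Type) [Fintype W] (G : SimpleGraph W), Fintype.card W = n →
        G.Connected → mvd G = k → G.edgeSet.ncard ≤ n * (n - 1) / 2 - k + 2) ∧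
      ∃ G : SimpleGraph (Fin n), G.Connected ∧ mvd G = k ∧
        G.edgeSet.ncard = n * (n - 1) / 2 - k + 2 := by
  refine ⟨fun W _ G hcard _ hmvd => ?_, ?_⟩
  · have := ncard_edgeSet_add_mvd_le (G := G) (by omega)
    rw [hmvd, hcard, Nat.choose_two_right] at this
    omega
  · let u : Fin n := ⟨n - 1, by omega⟩
    let w : Fin n := ⟨k - 2, by omega⟩
    let T : Set (Fin n) := Set.range (Fin.castLE (show k - 2 ≤ n by omega))
    have hu : u ∉ T := fun ⟨i, hi⟩ => by have := congrArg Fin.val hi; simp [u] at this; omega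
    have hw : w ∉ insert u T := by
      rintro (h | ⟨i, hi⟩)
      · have := congrArg Fin.val h; simp [u, w] at this; omega
      · have := congrArg Fin.val hi; simp [w] at this; omega
    have hT : T.ncard = k - 2 := by
      rw [Set.ncard_range_of_injective (Fin.castLE_injective _), Nat.card_eq_fintype_card,
        Fintype.card_fin]
    have hcount := (completeGraphDeleteStar u T).ncard_edgeSet_add_ncard_edgeSet_compl
    rw [completeGraphDeleteStar.ncard_compl_edgeSet hu, hT, Fintype.card_fin,
      Nat.choose_two_right] at hcount
    refine ⟨completeGraphDeleteStar u T, completeGraphDeleteStar.connected hw, ?_, ?_⟩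
    · rw [completeGraphDeleteStar.mvd_eq hu hw ⟨⟨0, by omega⟩, ⟨0, by omega⟩, rfl⟩, hT]
      omega
    · have : 2 * (n - 1) ≤ n * (n - 1) := Nat.mul_le_mul_right _ (by omega)
      omega

theorem max_size_mvd_k (n k : ℕ) (hn : 4 < n) (hk : 4 ≤ k) (hkn : k ≤ n - 1) :
    (∀ (W : Type) [Fintype W] (G : SimpleGraph W), Fintype.card W = n →
        G.Connected → mvd G = k → G.edgeSet.ncard ≤ n * (n - 1) / 2 - k + 2) ∧
      ∃ G : SimpleGraph (Fin n), G.Connected ∧ mvd G = k ∧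
        G.edgeSet.ncard = n * (n - 1) / 2 - k + 2 :=
  max_size_mvd_k_general n k hk hkn
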